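/- For all integers n ≥ 1, 3·F_{2n−1} = L_{4n−2} − 4·∑_{k=1}^{n−1} F_{2k}·L_{4n−4k−2}, where F and L are the Fibonacci and Lucas numbers. -/

import Mathlib

def lucas : ℕ → ℕ
  | 0 => 2
  | 1 => 1
  | n + 2 => lucas (n + 1) + lucas n

/-!
With `n = m + 1` the sum is the convolution of `F_{2k}` with `x_k = L_{4k+2}`. Since
`x_{k+2} = 7 x_{k+1} - x_k`, the convolution satisfies the same recurrence up to boundary terms,
which here add up to `12 F_{2m+3}`. The right-hand side `L_{4m+2} - 3 F_{2m+1}` satisfies this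
inhomogeneous recurrence as well, and both sides agree for `m = 0, 1`.
-/

open Finset

section Recurrences

variable {R : Type*} [CommRing R]

def IsFibonacciLike (a : ℕ → R) : Prop :=
  ∀ n, a (n + 2) = a (n + 1) + a n

theorem IsFibonacciLike.add_four {a : ℕ → R} (ha : IsFibonacciLike a) (n : ℕ) :
    a (n + 4) = 3 * a (n + 2) - a n := by
  linear_combination (norm := ring_nf) ha (n + 2) + ha (n + 1) - ha n

theorem IsFibonacciLike.add_eight {a : ℕ → R} (ha : IsFibonacciLike a) (n : ℕ) :
    a (n + 8) = 7 * a (n + 4) - a n := by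
  linear_combination (norm := ring_nf)
    ha.add_four (n + 4) + 3 * ha.add_four (n + 2) + ha.add_four n

theorem isFibonacciLike_fib : IsFibonacciLike (fun n ↦ (Nat.fib n : R)) := fun n ↦ by
  simp [Nat.fib_add_two, add_comm]

theorem isFibonacciLike_lucas : IsFibonacciLike (fun n ↦ (lucas n : R)) := fun n ↦ by
  simp [lucas]

theorem sum_antidiagonal_mul_add_two_of_recurrence (c : R) {x : ℕ → R}
    (hx : ∀ m, x (m + 2) = c * x (m + 1) - x m) (y : ℕ → R) (m : ℕ) :
    ∑ p ∈ antidiagonal (m + 2), y p.1 * x p.2 =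
      c * ∑ p ∈ antidiagonal (m + 1), y p.1 * x p.2 - ∑ p ∈ antidiagonal m, y p.1 * x p.2
        + y (m + 2) * x 0 + y (m + 1) * (x 1 - c * x 0) := by
  have hshift : ∑ p ∈ antidiagonal m, y p.1 * x (p.2 + 2) =
      c * ∑ p ∈ antidiagonal m, y p.1 * x (p.2 + 1) -
        ∑ p ∈ antidiagonal m, y p.1 * x p.2 := by
    rw [mul_sum, ← sum_sub_distrib]
    exact sum_congr rfl fun p _ ↦ by rw [hx]; ring
  simp only [Nat.sum_antidiagonal_succ', hshift]
  ring

theorem eq_of_recurrence (c : R) (g : ℕ → R) {u v : ℕ → R}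
    (hu : ∀ m, u (m + 2) = c * u (m + 1) - u m + g m)
    (hv : ∀ m, v (m + 2) = c * v (m + 1) - v m + g m) (h0 : u 0 = v 0) (h1 : u 1 = v 1) :
    u = v := by
  funext m
  induction m using Nat.twoStepInduction with
  | zero => exact h0
  | one => exact h1
  | more m ihm ihm1 => rw [hu, hv, ihm, ihm1]

end Recurrences

theorem four_mul_sum_antidiagonal_fib_mul_lucas (m : ℕ) :
    4 * ∑ p ∈ antidiagonal m, (Nat.fib (2 * p.1) : ℤ) * lucas (4 * p.2 + 2) =
      lucas (4 * m + 2) - 3 * Nat.fib (2 * m + 1) := by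
  have hlucas : ∀ m, (lucas (4 * (m + 2) + 2) : ℤ) =
      7 * lucas (4 * (m + 1) + 2) - lucas (4 * m + 2) :=
    fun m ↦ isFibonacciLike_lucas.add_eight (4 * m + 2)
  have hfib : ∀ m, (Nat.fib (2 * (m + 2) + 1) : ℤ) =
      3 * Nat.fib (2 * (m + 1) + 1) - Nat.fib (2 * m + 1) :=
    fun m ↦ isFibonacciLike_fib.add_four (2 * m + 1)
  revert m
  refine congrFun (eq_of_recurrence (7 : ℤ) (fun m ↦ 12 * Nat.fib (2 * m + 3))
    (fun m ↦ ?_) (fun m ↦ ?_) ?_ ?_)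
  · have hconv := sum_antidiagonal_mul_add_two_of_recurrence 7
      (x := fun k ↦ (lucas (4 * k + 2) : ℤ)) hlucas (fun k ↦ (Nat.fib (2 * k) : ℤ)) m
    have hl2 : lucas 2 = 3 := rfl
    have hl6 : lucas 6 = 18 := rfl
    simp only [mul_zero, mul_one, zero_add, hl2, hl6] at hconv
    rw [hconv]
    linear_combination (norm := ring_nf) 12 * isFibonacciLike_fib (R := ℤ) (2 * m + 2)
  · linear_combination (norm := ring_nf) hlucas m - 3 * hfib m
  · rfl
  · rfl

theorem stmt13 (n : ℕ) (hn : 1 ≤ n) :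
    3 * (Nat.fib (2 * n - 1) : ℤ) =
      (lucas (4 * n - 2) : ℤ) -
        4 * ∑ k ∈ Finset.Icc 1 (n - 1), (Nat.fib (2 * k) : ℤ) * (lucas (4 * n - 4 * k - 2) : ℤ) := by
  obtain ⟨m, rfl⟩ : ∃ m, n = m + 1 := ⟨n - 1, by omega⟩
  have hsum : ∑ k ∈ Icc 1 m, (Nat.fib (2 * k) : ℤ) * lucas (4 * (m + 1) - 4 * k - 2) =
      ∑ p ∈ antidiagonal m, (Nat.fib (2 * p.1) : ℤ) * lucas (4 * p.2 + 2) := by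
    rw [Nat.sum_antidiagonal_eq_sum_range_succ
        (fun i j ↦ (Nat.fib (2 * i) : ℤ) * lucas (4 * j + 2)),
      Nat.succ_eq_add_one, sum_range_eq_add_Ico _ m.add_one_pos, Ico_add_one_right_eq_Icc]
    simp only [mul_zero, Nat.fib_zero, Nat.cast_zero, zero_mul, zero_add]
    refine sum_congr rfl fun k hk ↦ ?_
    rw [show 4 * (m + 1) - 4 * k - 2 = 4 * (m - k) + 2 by grind]
  rw [show 2 * (m + 1) - 1 = 2 * m + 1 by omega, show 4 * (m + 1) - 2 = 4 * m + 2 by omega,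
    Nat.add_sub_cancel, hsum, four_mul_sum_antidiagonal_fib_mul_lucas]
  ring
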